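/- arXiv:2402.00485 — 2 statements merged into one kernel-verified Lean document; each statement's English description precedes it below -/
import Mathlib

section
/- Let U be a nonempty finite set of users partitioned into nonempty groups U1 and U2, I a nonempty finite set of items partitioned into nonempty groups I1 and I2, N a natural number, S : U → Fin N → ℝ relevance scores, MC : U → Fin N → ℝ consumer-relevance coefficients, ι : U → Fin N → I the assignment of the item at each rank of each user's candidate list, and λ1, λ2 ∈ ℝ. For any binary matrix A : U → Fin N → {0,1} define DCF(A) = (1/|U1|)∑_{u∈U1}∑_i MC u i · A u i − (1/|U2|)∑_{u∈U2}∑_i MC u i · A u i, MP(j,A) = ∑_{(u,i) : ι u i = j} A u i for each item j, and DPF(A) = (1/|I1|)∑_{j∈I1} MP(j,A) − (1/|I2|)∑_{j∈I2} MP(j,A). Then the CP-fairness objective ∑_{u,i} S u i · A u i − λ1·DCF(A) − λ2·DPF(A) equals ∑_{u,i} Ŝ u i · A u i, where Ŝ u i = S u i − λ1·w_u·MC u i − λ2·v_{u i}, with w_u = 1/|U1| if u ∈ U1 and w_u = −1/|U2| if u ∈ U2, and v_{u i} = 1/|I1| if ι u i ∈ I1 and v_{u i} = −1/|I2| if ι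 u i ∈ I2. In particular the objective is a linear function of the decision matrix A. -/
/-- The CP-fairness objective is a linear function of the binary decision matrix A:
it can be rewritten as a single weighted sum with adjusted scores Ŝ. -/
theorem cp_objective_linear
    {U I : Type*} [Fintype U] [DecidableEq U] [Fintype I] [DecidableEq I] [Nonempty U] [Nonempty I]
    (U1 U2 : Finset U) (hU1 : U1.Nonempty) (hU2 : U2.Nonempty)
    (hUdisj : Disjoint U1 U2) (hUcover : U1 ∪ U2 = Finset.univ)
    (I1 I2 : Finset I) (hI1 : I1.Nonempty) (hI2 : I2.Nonempty)
    (hIdisj : Disjoint I1 I2) (hIcover : I1 ∪ I2 = Finset.univ)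
    (N : ℕ) (S MC : U → Fin N → ℝ) (ι : U → Fin N → I) (lam1 lam2 : ℝ)
    (A : U → Fin N → ℝ) (hA : ∀ u i, A u i = 0 ∨ A u i = 1) :
    (∑ u, ∑ i, S u i * A u i)
      - lam1 * ((∑ u ∈ U1, ∑ i, MC u i * A u i) / U1.card
              - (∑ u ∈ U2, ∑ i, MC u i * A u i) / U2.card)
      - lam2 * ((∑ j ∈ I1, ∑ u, ∑ i, if ι u i = j then A u i else 0) / I1.card
              - (∑ j ∈ I2, ∑ u, ∑ i, if ι u i = j then A u i else 0) / I2.card)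
    = ∑ u, ∑ i,
        (S u i
          - lam1 * (if u ∈ U1 then (1 : ℝ) / U1.card else -1 / U2.card) * MC u i
          - lam2 * (if ι u i ∈ I1 then (1 : ℝ) / I1.card else -1 / I2.card)) * A u i := by
  have hsplit : ∀ f : U → ℝ, ∑ u, f u = ∑ u ∈ U1, f u + ∑ u ∈ U2, f u := by
    intro f
    rw [← Finset.sum_union hUdisj, hUcover]
  have hnotU1 : ∀ u ∈ U2, u ∉ U1 := fun u hu h1 =>
    (Finset.disjoint_left.mp hUdisj) h1 hu
  have hitem : ∀ (J : Finset I),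
      (∑ j ∈ J, ∑ u, ∑ i, if ι u i = j then A u i else 0)
        = ∑ u, ∑ i, if ι u i ∈ J then A u i else 0 := by
    intro J
    rw [Finset.sum_comm]
    refine Finset.sum_congr rfl fun u _ => ?_
    rw [Finset.sum_comm]
    refine Finset.sum_congr rfl fun i _ => ?_
    simp [Finset.sum_ite_eq' J (ι u i)]
  -- rewrite RHS
  have hRHS :
      (∑ u, ∑ i,
        (S u i
          - lam1 * (if u ∈ U1 then (1 : ℝ) / U1.card else -1 / U2.card) * MC u i
          - lam2 * (if ι u i ∈ I1 then (1 : ℝ) / I1.card else -1 / I2.card)) * A u i)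
      = (∑ u, ∑ i, S u i * A u i)
        - (∑ u, ∑ i, lam1 * (if u ∈ U1 then (1 : ℝ) / U1.card else -1 / U2.card) * MC u i * A u i)
        - (∑ u, ∑ i, lam2 * (if ι u i ∈ I1 then (1 : ℝ) / I1.card else -1 / I2.card) * A u i) := by
    simp [sub_mul, Finset.sum_sub_distrib]
  rw [hRHS]
  congr 1
  · congr 1
    rw [hsplit]
    have h1 : ∑ u ∈ U1, ∑ i, lam1 * (if u ∈ U1 then (1 : ℝ) / U1.card else -1 / U2.card) * MC u i * A u i
        = lam1 * ((∑ u ∈ U1, ∑ i, MC u i * A u i) / U1.card) := by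
      rw [Finset.sum_div, Finset.mul_sum]
      refine Finset.sum_congr rfl fun u hu => ?_
      rw [if_pos hu, Finset.sum_div, Finset.mul_sum]
      refine Finset.sum_congr rfl fun i _ => ?_
      ring
    have h2 : ∑ u ∈ U2, ∑ i, lam1 * (if u ∈ U1 then (1 : ℝ) / U1.card else -1 / U2.card) * MC u i * A u i
        = -(lam1 * ((∑ u ∈ U2, ∑ i, MC u i * A u i) / U2.card)) := by
      rw [← neg_neg (∑ u ∈ U2, ∑ i, lam1 * _ * MC u i * A u i)]
      congr 1
      rw [← Finset.sum_neg_distrib, Finset.sum_div, Finset.mul_sum]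
      refine Finset.sum_congr rfl fun u hu => ?_
      rw [if_neg (hnotU1 u hu), ← Finset.sum_neg_distrib, Finset.sum_div, Finset.mul_sum]
      refine Finset.sum_congr rfl fun i _ => ?_
      ring
    rw [h1, h2]
    ring
  · rw [hitem I1, hitem I2]
    have hcases : ∀ (u : U) (i : Fin N),
        lam2 * (if ι u i ∈ I1 then (1 : ℝ) / I1.card else -1 / I2.card) * A u i
        = lam2 / I1.card * (if ι u i ∈ I1 then A u i else 0)
          - lam2 / I2.card * (if ι u i ∈ I2 then A u i else 0) := by
      intro u i
      by_cases h : ι u i ∈ I1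
      · have h2 : ι u i ∉ I2 := fun h2 => (Finset.disjoint_left.mp hIdisj) h h2
        rw [if_pos h, if_pos h, if_neg h2]; ring
      · have h2 : ι u i ∈ I2 := by
          have := hIcover ▸ Finset.mem_univ (ι u i)
          rcases Finset.mem_union.mp this with h1 | h1
          · exact absurd h1 h
          · exact h1
        rw [if_neg h, if_neg h, if_pos h2]; ring
    simp only [hcases, Finset.sum_sub_distrib, ← Finset.mul_sum]
    ring
end

section
/- Let U be a nonempty finite set of users partitioned into nonempty groups U1 and U2, I a nonempty finite set of items partitioned into nonempty groups I1 and I2, N and K natural numbers with K ≤ N, S : U → Fin N → ℝ, MC : U → Fin N → ℝ, ι : U → Fin N → I, and λ1, λ2 ∈ ℝ. Define Ŝ u i = S u i − λ1·w_u·MC u i − λ2·v_{u i}, where w_u = 1/|U1| if u ∈ U1 and −1/|U2| if u ∈ U2, and v_{u i} = 1/|I1| if ι u i ∈ I1 and −1/|I2| if ι u i ∈ I2. Then over all binary matrices A : U → Fin N → {0,1} with ∑_i A u i = K for every u, the maximum value of the CP-fairness objective ∑_{u,i} S u i·A u i − λ1·DCF(A) − λ2·DPF(A) exists and equals ∑_{u∈U}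 (sum of the K largest values among Ŝ u 1, …, Ŝ u N); moreover, any matrix A whose row for each user u indicates a K-element subset T_u of Fin N with Ŝ u j ≤ Ŝ u i for all i ∈ T_u, j ∉ T_u attains this maximum. (Correctness of the Fair Re-ranking Greedy Algorithm for the mixed-integer program of Equation 3.) -/
lemma aux_sum_le_sum_of_card_eq {α : Type*} (f : α → ℝ) {B C : Finset α}
    (h : B.card = C.card) (hle : ∀ b ∈ B, ∀ c ∈ C, f b ≤ f c) :
    ∑ b ∈ B, f b ≤ ∑ c ∈ C, f c := by
  rcases B.eq_empty_or_nonempty with hB | hB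
  · have : C = ∅ := Finset.card_eq_zero.mp (by simp [hB] at h; omega)
    simp [hB, this]
  · have hC : C.Nonempty := Finset.card_pos.mp (h ▸ Finset.card_pos.mpr hB)
    calc ∑ b ∈ B, f b ≤ B.card • C.inf' hC f :=
          Finset.sum_le_card_nsmul _ _ _
            (fun b hb => Finset.le_inf' hC f fun c hc => hle b hb c hc)
      _ = C.card • C.inf' hC f := by rw [h]
      _ ≤ ∑ c ∈ C, f c := Finset.card_nsmul_le_sum _ _ _ (fun c hc => Finset.inf'_le f hc)

lemma aux_exchange {α : Type*} [DecidableEq α] (f : α → ℝ) (T T' : Finset α)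
    (h : T.card = T'.card) (hdom : ∀ i ∈ T, ∀ j ∉ T, f j ≤ f i) :
    ∑ i ∈ T', f i ≤ ∑ i ∈ T, f i := by
  rw [← Finset.sum_inter_add_sum_sdiff T' T f, ← Finset.sum_inter_add_sum_sdiff T T' f,
    Finset.inter_comm T T']
  have hcard : (T' \ T).card = (T \ T').card := Finset.card_sdiff_comm h.symm
  have : ∑ i ∈ T' \ T, f i ≤ ∑ i ∈ T \ T', f i :=
    aux_sum_le_sum_of_card_eq f hcard
      (fun b hb c hc => hdom c (Finset.mem_sdiff.mp hc).1 b (Finset.mem_sdiff.mp hb).2)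
  linarith

/-- Correctness of the Fair Re-ranking Greedy Algorithm for the mixed-integer
program of Equation 3: the maximum of the CP-fairness objective over feasible
binary decision matrices equals the sum over users of the sum of the K largest
adjusted scores Ŝ, and any matrix selecting a top-K set of adjusted scores for
each user attains this maximum. -/
theorem greedy_correct
    {U I : Type*} [Fintype U] [DecidableEq U] [Fintype I] [DecidableEq I]
    [Nonempty U] [Nonempty I]
    (U1 U2 : Finset U) (hU1 : U1.Nonempty) (hU2 : U2.Nonempty)
    (hUdisj : Disjoint U1 U2) (hUcover : U1 ∪ U2 = Finset.univ)
    (I1 I2 : Finset I) (hI1 : I1.Nonempty) (hI2 : I2.Nonempty)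
    (hIdisj : Disjoint I1 I2) (hIcover : I1 ∪ I2 = Finset.univ)
    (N K : ℕ) (hK : K ≤ N)
    (S MC : U → Fin N → ℝ) (ι : U → Fin N → I) (lam1 lam2 : ℝ)
    (Shat : U → Fin N → ℝ)
    (hShat : ∀ u i, Shat u i =
      S u i - lam1 * (if u ∈ U1 then (1 : ℝ) / U1.card else -1 / U2.card) * MC u i
            - lam2 * (if ι u i ∈ I1 then (1 : ℝ) / I1.card else -1 / I2.card))
    (F : (U → Fin N → ℝ) → ℝ)
    (hF : ∀ A, F A =
      (∑ u, ∑ i, S u i * A u i)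
      - lam1 * ((∑ u ∈ U1, ∑ i, MC u i * A u i) / U1.card
                - (∑ u ∈ U2, ∑ i, MC u i * A u i) / U2.card)
      - lam2 * ((∑ j ∈ I1, ∑ u, ∑ i, if ι u i = j then A u i else 0) / I1.card
                - (∑ j ∈ I2, ∑ u, ∑ i, if ι u i = j then A u i else 0) / I2.card)) :
    IsGreatest
      {x : ℝ | ∃ A : U → Fin N → ℝ,
        (∀ u i, A u i = 0 ∨ A u i = 1) ∧ (∀ u, ∑ i, A u i = (K : ℝ)) ∧ x = F A}
      (∑ u, ((Finset.univ : Finset (Fin N)).powersetCard K).sup'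
        (Finset.powersetCard_nonempty.mpr (by simpa using hK))
        (fun T => ∑ i ∈ T, Shat u i))
    ∧ ∀ (A : U → Fin N → ℝ) (T : U → Finset (Fin N)),
        (∀ u, (T u).card = K) →
        (∀ u i, A u i = if i ∈ T u then 1 else 0) →
        (∀ u, ∀ i ∈ T u, ∀ j ∉ T u, Shat u j ≤ Shat u i) →
        F A = ∑ u, ((Finset.univ : Finset (Fin N)).powersetCard K).sup'
          (Finset.powersetCard_nonempty.mpr (by simpa using hK))
          (fun T' => ∑ i ∈ T', Shat u i) := by
  classical
  have hne : ((Finset.univ : Finset (Fin N)).powersetCard K).Nonempty :=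
    Finset.powersetCard_nonempty.mpr (by simpa using hK)
  -- Key reformulation: F A = ∑ u ∑ i Shat u i * A u i.
  have key : ∀ A : U → Fin N → ℝ, F A = ∑ u, ∑ i, Shat u i * A u i := by
    intro A
    have e : ∀ u i, Shat u i * A u i =
        S u i * A u i
        - lam1 * ((if u ∈ U1 then (1:ℝ)/U1.card else -1/U2.card) * (MC u i * A u i))
        - lam2 * ((if ι u i ∈ I1 then (1:ℝ)/I1.card else -1/I2.card) * A u i) := by
      intro u i; rw [hShat]; ring
    have hA1 : ∑ u, ((if u ∈ U1 then (1:ℝ)/U1.card else -1/U2.card) * ∑ i, MC u i * A u i)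
        = (∑ u ∈ U1, ∑ i, MC u i * A u i)/U1.card
          - (∑ u ∈ U2, ∑ i, MC u i * A u i)/U2.card := by
      rw [← hUcover, Finset.sum_union hUdisj]
      have e1 : ∑ u ∈ U1, ((if u ∈ U1 then (1:ℝ)/U1.card else -1/U2.card) * ∑ i, MC u i * A u i)
          = ∑ u ∈ U1, (∑ i, MC u i * A u i)/(U1.card:ℝ) :=
        Finset.sum_congr rfl fun u hu => by rw [if_pos hu]; ring
      have e2 : ∑ u ∈ U2, ((if u ∈ U1 then (1:ℝ)/U1.card else -1/U2.card) * ∑ i, MC u i * A u i)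
          = ∑ u ∈ U2, -((∑ i, MC u i * A u i)/(U2.card:ℝ)) :=
        Finset.sum_congr rfl fun u hu => by
          rw [if_neg (fun h => Finset.disjoint_left.mp hUdisj h hu)]; ring
      rw [e1, e2, Finset.sum_neg_distrib, ← Finset.sum_div, ← Finset.sum_div, ← sub_eq_add_neg]
    have hY : ∀ J : Finset I, ∑ j ∈ J, ∑ u, ∑ i, (if ι u i = j then A u i else 0)
        = ∑ u, ∑ i, (if ι u i ∈ J then A u i else 0) := by
      intro J
      rw [Finset.sum_comm]
      refine Finset.sum_congr rfl fun u _ => ?_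
      rw [Finset.sum_comm]
      refine Finset.sum_congr rfl fun i _ => ?_
      exact Finset.sum_ite_eq J (ι u i) (fun _ => A u i)
    have hA2 : ∑ u, ∑ i, ((if ι u i ∈ I1 then (1:ℝ)/I1.card else -1/I2.card) * A u i)
        = (∑ u, ∑ i, if ι u i ∈ I1 then A u i else 0)/I1.card
          - (∑ u, ∑ i, if ι u i ∈ I2 then A u i else 0)/I2.card := by
      rw [Finset.sum_div, Finset.sum_div, ← Finset.sum_sub_distrib]
      refine Finset.sum_congr rfl fun u _ => ?_
      rw [Finset.sum_div, Finset.sum_div, ← Finset.sum_sub_distrib]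
      refine Finset.sum_congr rfl fun i _ => ?_
      by_cases h : ι u i ∈ I1
      · have h2 : ι u i ∉ I2 := fun hh => Finset.disjoint_left.mp hIdisj h hh
        rw [if_pos h, if_pos h, if_neg h2]; ring
      · have h2 : ι u i ∈ I2 := by
          have : ι u i ∈ I1 ∪ I2 := hIcover.symm ▸ Finset.mem_univ _
          exact (Finset.mem_union.mp this).resolve_left h
        rw [if_neg h, if_neg h, if_pos h2]; ring
    rw [hF A, hY I1, hY I2, ← hA2, ← hA1]
    simp_rw [e, Finset.sum_sub_distrib, ← Finset.mul_sum]
  -- Each binary row with sum K is the indicator of a K-element set.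
  have row : ∀ (A : U → Fin N → ℝ) (u : U), (∀ i, A u i = 0 ∨ A u i = 1) →
      (∑ i, A u i = (K:ℝ)) →
      ∃ T : Finset (Fin N), T.card = K ∧ ∑ i, Shat u i * A u i = ∑ i ∈ T, Shat u i := by
    intro A u hbin hsum
    refine ⟨Finset.univ.filter (fun i => A u i = 1), ?_, ?_⟩
    · have h1 : ∑ i, A u i = ((Finset.univ.filter (fun i => A u i = 1)).card : ℝ) := by
        rw [Finset.card_filter]
        push_cast
        refine Finset.sum_congr rfl fun i _ => ?_
        rcases hbin i with h | h <;> simp [h]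
      have h2 : ((Finset.univ.filter (fun i => A u i = 1)).card : ℝ) = (K : ℝ) := by
        rw [← h1, hsum]
      exact_mod_cast h2
    · rw [Finset.sum_filter]
      refine Finset.sum_congr rfl fun i _ => ?_
      rcases hbin i with h | h <;> simp [h]
  constructor
  · constructor
    · -- membership: a top-K selection attains the value
      choose T hTmem hTeq using fun u =>
        Finset.exists_mem_eq_sup' hne (fun T => ∑ i ∈ T, Shat u i)
      refine ⟨fun u i => if i ∈ T u then 1 else 0, fun u i => ?_, fun u => ?_, ?_⟩
      · by_cases h : i ∈ T u <;> simp [h]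
      · have : (T u).card = K := (Finset.mem_powersetCard.mp (hTmem u)).2
        simp [Finset.sum_ite_mem, this]
      · rw [key]
        refine Finset.sum_congr rfl fun u _ => ?_
        rw [hTeq u]
        simp [mul_ite, Finset.sum_ite_mem]
    · -- upper bound
      rintro x ⟨A, hbin, hsum, rfl⟩
      rw [key]
      refine Finset.sum_le_sum fun u _ => ?_
      obtain ⟨T, hTcard, hTeq⟩ := row A u (hbin u) (hsum u)
      rw [hTeq]
      exact Finset.le_sup' (fun T => ∑ i ∈ T, Shat u i)
        (Finset.mem_powersetCard.mpr ⟨Finset.subset_univ T, hTcard⟩)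
  · -- any top-K selection attains the maximum
    intro A T hcard hA hdom
    rw [key]
    refine Finset.sum_congr rfl fun u _ => ?_
    have h1 : ∑ i, Shat u i * A u i = ∑ i ∈ T u, Shat u i := by
      simp only [hA, mul_ite, mul_one, mul_zero, Finset.sum_ite_mem, Finset.univ_inter]
    rw [h1]
    refine le_antisymm
      (Finset.le_sup' (fun T' => ∑ i ∈ T', Shat u i)
        (Finset.mem_powersetCard.mpr ⟨Finset.subset_univ _, hcard u⟩))
      (Finset.sup'_le _ _ fun T' hT' => ?_)
    exact aux_exchange (Shat u) (T u) T'
      (by rw [hcard u, (Finset.mem_powersetCard.mp hT').2]) (hdom u)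
end
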